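/- Let p be a prime with p ≡ 5 (mod 8), p > 64, such that for every odd positive integer x with x² < p, p + x² = 2qᵃ for some prime q and positive integer a. Then a ≤ 2 always holds. -/

import Mathlib

/-!
If `a ≥ 3`, then `q` is odd (since `p + x² ≡ 6 mod 8`) and `q³ < p`. Reducing `x` modulo `q`
gives an odd `0 < y < q` with `q ∣ p + y²`, and `z = 2q - y` is another one, with
`z² < 4q² < p`. The hypothesis writes `p + y² = 2qᵇ` and `p + z² = 2qᶜ`, where `b, c ≥ 2`
because `2q < p`. Then `q²` divides `(p + y²) + 4q² - (p + z²) = 4qy`, so `q ∣ y`: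
impossible.
-/

lemma Nat.dvd_add_sq_sub_of_dvd {q m n y : ℕ} (hm : q ∣ m) (hy : y ≤ m)
    (h : q ∣ n + y ^ 2) : q ∣ n + (m - y) ^ 2 := by
  zify [hy] at h hm ⊢
  have hsplit : (n : ℤ) + (m - y) ^ 2 = (n + y ^ 2) + m * (m - 2 * y) := by ring
  rw [hsplit]
  exact dvd_add h (hm.mul_right _)

lemma Nat.exists_odd_lt_dvd_add_sq {q n x : ℕ} (hq : Odd q) (hx : ¬ q ∣ x)
    (h : q ∣ n + x ^ 2) : ∃ y, Odd y ∧ 0 < y ∧ y < q ∧ q ∣ n + y ^ 2 := by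
  have hr0 : x % q ≠ 0 := fun h0 => hx (Nat.dvd_of_mod_eq_zero h0)
  have hrq : x % q < q := Nat.mod_lt _ hq.pos
  have hr : q ∣ n + (x % q) ^ 2 := by
    have hmod : n + (x % q) ^ 2 ≡ n + x ^ 2 [MOD q] := ((Nat.mod_modEq x q).pow 2).add_left n
    exact Nat.modEq_zero_iff_dvd.mp (hmod.trans (Nat.modEq_zero_iff_dvd.mpr h))
  rcases Nat.even_or_odd (x % q) with heven | hodd
  · refine ⟨q - x % q, Nat.Odd.sub_even hrq.le hq heven, by omega, by omega, ?_⟩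
    exact Nat.dvd_add_sq_sub_of_dvd dvd_rfl hrq.le hr
  · exact ⟨x % q, hodd, Nat.pos_of_ne_zero hr0, hrq, hr⟩

lemma Nat.Prime.eq_of_dvd_two_mul_pow {q r b : ℕ} (hq : q.Prime) (hq2 : q ≠ 2)
    (hr : r.Prime) (h : q ∣ 2 * r ^ b) : q = r := by
  rcases hq.dvd_mul.mp h with h2 | hpow
  · exact absurd ((Nat.prime_dvd_prime_iff_eq hq Nat.prime_two).mp h2) hq2
  · exact (Nat.prime_dvd_prime_iff_eq hq hr).mp (hq.dvd_of_dvd_pow hpow)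

lemma ne_two_of_add_sq_eq_two_mul_pow {n x q a : ℕ} (hn : n % 8 = 5) (hx : Odd x)
    (ha : 2 ≤ a) (h : n + x ^ 2 = 2 * q ^ a) : q ≠ 2 := by
  rintro rfl
  have h8 : 2 * 2 ^ 2 ∣ 2 * 2 ^ a := mul_dvd_mul_left 2 (pow_dvd_pow 2 ha)
  have hx8 := Nat.eight_dvd_sq_sub_one_of_odd hx
  omega

lemma Nat.Prime.not_sq_dvd_add_sq_two_mul_sub {q n y : ℕ} (hq : q.Prime) (hq2 : q ≠ 2)
    (hy0 : 0 < y) (hyq : y < q) (h : q ^ 2 ∣ n + y ^ 2) :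
    ¬ q ^ 2 ∣ n + (2 * q - y) ^ 2 := by
  intro h'
  have h4y : q * q ∣ q * (4 * y) := by
    have hdiff : ((q * (4 * y) : ℕ) : ℤ)
        = (n + y ^ 2 : ℕ) + (q ^ 2 : ℕ) * 4 - (n + (2 * q - y) ^ 2 : ℕ) := by
      push_cast [Nat.cast_sub (by omega : y ≤ 2 * q)]
      ring
    rw [← sq, ← Int.natCast_dvd_natCast, hdiff]
    exact ((Int.natCast_dvd_natCast.mpr h).add (dvd_mul_right _ _)).sub
      (Int.natCast_dvd_natCast.mpr h')
  have hcop : q.Coprime 4 := ((Nat.coprime_primes hq Nat.prime_two).mpr hq2).pow_right 2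
  have hqy : q ∣ y := hcop.dvd_of_dvd_mul_left (Nat.dvd_of_mul_dvd_mul_left hq.pos h4y)
  exact absurd (Nat.le_of_dvd hy0 hqy) (by omega)

section

variable {p : ℕ} (hform : ∀ x : ℕ, Odd x → 0 < x → x ^ 2 < p →
  ∃ q a : ℕ, q.Prime ∧ 0 < a ∧ p + x ^ 2 = 2 * q ^ a)
include hform

lemma sq_dvd_add_sq_of_dvd {q y : ℕ} (hq : q.Prime) (hq2 : q ≠ 2) (hqp : 2 * q < p)
    (hy : Odd y) (hy0 : 0 < y) (hyp : y ^ 2 < p) (h : q ∣ p + y ^ 2) : q ^ 2 ∣ p + y ^ 2 := by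
  obtain ⟨r, b, hr, -, hrep⟩ := hform y hy hy0 hyp
  obtain rfl : q = r := hq.eq_of_dvd_two_mul_pow hq2 hr (hrep ▸ h)
  have hb : 2 ≤ b := by
    have : q ^ 1 < q ^ b := by rw [pow_one]; omega
    exact (Nat.pow_lt_pow_iff_right hq.one_lt).mp this
  exact hrep ▸ (pow_dvd_pow q hb).mul_left 2

end

theorem stmt_19 (p : ℕ) (hp : p.Prime) (hmod : p % 8 = 5) (h64 : 64 < p)
    (hform : ∀ x : ℕ, Odd x → 0 < x → x ^ 2 < p →
      ∃ q a : ℕ, q.Prime ∧ 0 < a ∧ p + x ^ 2 = 2 * q ^ a) :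
    ∀ x q a : ℕ, Odd x → 0 < x → x ^ 2 < p → q.Prime → 0 < a →
      p + x ^ 2 = 2 * q ^ a → a ≤ 2 := by
  rintro x q a hx - hxp hq ha hrep
  by_contra! ha3
  have hq2 : q ≠ 2 := ne_two_of_add_sq_eq_two_mul_pow hmod hx (by omega) hrep
  have hq3 : q ^ 3 < p := (Nat.pow_le_pow_right hq.pos ha3).trans_lt (by omega)
  have hq_ge : 3 ≤ q := by have := hq.two_le; omega
  have h4q : 4 * q ^ 2 < p := by
    rcases hq_ge.eq_or_lt with rfl | hq4
    · omega
    · nlinarith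
  have hdvdx : q ∣ p + x ^ 2 := hrep ▸ (dvd_pow_self q ha.ne').mul_left 2
  have hqx : ¬ q ∣ x := fun hqx =>
    have hqp : q ∣ p := (Nat.dvd_add_left (dvd_pow hqx two_ne_zero)).mp hdvdx
    absurd ((Nat.prime_dvd_prime_iff_eq hq hp).mp hqp) (by nlinarith)
  obtain ⟨y, hy, hy0, hyq, hdvdy⟩ :=
    Nat.exists_odd_lt_dvd_add_sq (hq.odd_of_ne_two hq2) hqx hdvdx
  have hsq : ∀ z, z < 2 * q → Odd z → 0 < z → q ∣ p + z ^ 2 → q ^ 2 ∣ p + z ^ 2 :=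
    fun z hz hzo hz0 hzd =>
      sq_dvd_add_sq_of_dvd hform hq hq2 (by nlinarith) hzo hz0 (by nlinarith) hzd
  have hz : Odd (2 * q - y) := Nat.Even.sub_odd (by omega) (even_two_mul q) hy
  have hdvdz : q ∣ p + (2 * q - y) ^ 2 :=
    Nat.dvd_add_sq_sub_of_dvd (dvd_mul_left q 2) (by omega) hdvdy
  exact hq.not_sq_dvd_add_sq_two_mul_sub hq2 hy0 hyq (hsq y (by omega) hy hy0 hdvdy)
    (hsq _ (by omega) hz (by omega) hdvdz)
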